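/- arXiv:1408.0968 — 10 statements merged into one kernel-verified Lean document; each statement's English description precedes it below -/
import Mathlib

section
/- For every finite group G, b1(G) = l(G): the maximum over all permutation representations of G of the maximum size of an irredundant base equals the length of the longest chain of subgroups of G. -/
/-- A base: the pointwise stabiliser of the sequence equals the kernel of the action. -/
def IsBase (G : Type) [Group G] {Ω : Type} [MulAction G Ω] {k : ℕ} (b : Fin k → Ω) : Prop :=
  ∀ g : G, (∀ i, g • b i = b i) → ∀ ω : Ω, g • ω = ω

/-- Irredundant: no point is fixed by the pointwise stabiliser of its predecessors. -/
def IsIrredundant (G : Type) [Group G] {Ω : Type} [MulAction G Ω] {k : ℕ} (b : Fin k → Ω) : Prop :=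
  ∀ i : Fin k, ∃ g : G, (∀ j, j < i → g • b j = b j) ∧ g • b i ≠ b i

/-- Minimal: no point is fixed by the pointwise stabiliser of the other points. -/
def IsMinimal (G : Type) [Group G] {Ω : Type} [MulAction G Ω] {k : ℕ} (b : Fin k → Ω) : Prop :=
  ∀ i : Fin k, ∃ g : G, (∀ j, j ≠ i → g • b j = b j) ∧ g • b i ≠ b i

noncomputable def b1 (G : Type) [Group G] : ℕ :=
  sSup {k | ∃ (Ω : Type) (_ : Finite Ω) (m : MulAction G Ω), ∃ b : Fin k → Ω,
    @IsBase G _ Ω m k b ∧ @IsIrredundant G _ Ω m k b}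

noncomputable def b2 (G : Type) [Group G] : ℕ :=
  sSup {k | ∃ (Ω : Type) (_ : Finite Ω) (m : MulAction G Ω), ∃ b : Fin k → Ω,
    @IsBase G _ Ω m k b ∧ @IsMinimal G _ Ω m k b}

noncomputable def minBaseSize (G : Type) [Group G] (Ω : Type) [MulAction G Ω] : ℕ :=
  sInf {k | ∃ b : Fin k → Ω, IsBase G b}

noncomputable def b3 (G : Type) [Group G] : ℕ :=
  sSup {k | ∃ (Ω : Type) (_ : Finite Ω) (m : MulAction G Ω), k = @minBaseSize G _ Ω m}

/-- The length of the longest chain of subgroups of `G`. -/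
noncomputable def subgroupChainLength (G : Type) [Group G] : ℕ :=
  sSup {l | ∃ c : Fin (l + 1) → Subgroup G, StrictAnti c ∧ c 0 = ⊤ ∧ c (Fin.last l) = ⊥}

def IsFaithfulAction (G Ω : Type) [Group G] [MulAction G Ω] : Prop :=
  ∀ g : G, (∀ ω : Ω, g • ω = ω) → g = 1

def IsTransitiveAction (G Ω : Type) [Group G] [MulAction G Ω] : Prop :=
  ∀ x y : Ω, ∃ g : G, g • x = y

def IsPrimitiveAction (G Ω : Type) [Group G] [MulAction G Ω] : Prop :=
  IsTransitiveAction G Ω ∧ Nontrivial Ω ∧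
    ∀ r : Setoid Ω, (∀ (g : G) (x y : Ω), r.r x y → r.r (g • x) (g • y)) → r = ⊥ ∨ r = ⊤

def IsIndependent (G : Type) [Group G] (S : Finset G) : Prop :=
  ∀ g ∈ S, g ∉ Subgroup.closure ((S : Set G) \ {g})

noncomputable def maxIndependent (G : Type) [Group G] : ℕ :=
  sSup {n | ∃ S : Finset G, S.card = n ∧ IsIndependent G S}

def IsJoinEmbedding (G : Type) [Group G] (n : ℕ) (f : Finset (Fin n) → Subgroup G) : Prop :=
  Function.Injective f ∧ f ∅ = ⊥ ∧ ∀ I J, f (I ∪ J) = f I ⊔ f J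

def IsMeetEmbedding (G : Type) [Group G] (n : ℕ) (f : Finset (Fin n) → Subgroup G) : Prop :=
  Function.Injective f ∧ f ∅ = ⊤ ∧ ∀ I J, f (I ∪ J) = f I ⊓ f J

/-!
An irredundant sequence `b₀, …, b_{k-1}` makes the pointwise stabilisers of its prefixes a strictly
decreasing chain `G = G₀ > G₁ > ⋯ > G_k`, which extends by `1` to a chain of length at least `k`.
Conversely, a chain `G = G₀ > ⋯ > G_l = 1` is realised by the action of `G` on
the disjoint union of the coset spaces `G / G_{i+1}`: the trivial cosets `b_i = G_{i+1}` have
prefix stabilisers exactly `G_i`, so they form an irredundant base of size `l`.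
-/

lemma Fin.strictAnti_snoc_bot {α : Type*} [PartialOrder α] [OrderBot α] {k : ℕ}
    {c : Fin (k + 1) → α} (hc : StrictAnti c) (hlast : c (Fin.last k) ≠ ⊥) :
    StrictAnti (Fin.snoc c ⊥ : Fin (k + 2) → α) := by
  rw [Fin.strictAnti_iff_succ_lt]
  intro i
  induction i using Fin.lastCases with
  | last => simpa [Fin.snoc_castSucc] using bot_lt_iff_ne_bot.2 hlast
  | cast j =>
    rw [Fin.succ_castSucc, Fin.snoc_castSucc, Fin.snoc_castSucc]
    exact hc Fin.castSucc_lt_succ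

section

variable {G : Type} [Group G]

lemma bddAbove_subgroupChainLengths [Finite G] :
    BddAbove {l | ∃ c : Fin (l + 1) → Subgroup G, StrictAnti c ∧ c 0 = ⊤ ∧ c (Fin.last l) = ⊥} := by
  refine ⟨Nat.card (Subgroup G), fun l ⟨c, hc, _⟩ => ?_⟩
  have := Nat.card_le_card_of_injective c hc.injective
  rw [Nat.card_eq_fintype_card, Fintype.card_fin] at this
  omega

lemma le_subgroupChainLength_of_strictAnti [Finite G] {k : ℕ} {c : Fin (k + 1) → Subgroup G}
    (hc : StrictAnti c) (h0 : c 0 = ⊤) : k ≤ subgroupChainLength G := by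
  by_cases hlast : c (Fin.last k) = ⊥
  · exact le_csSup bddAbove_subgroupChainLengths ⟨c, hc, h0, hlast⟩
  · refine (Nat.le_succ k).trans (le_csSup bddAbove_subgroupChainLengths
      ⟨Fin.snoc c ⊥, Fin.strictAnti_snoc_bot hc hlast, ?_, by simp⟩)
    rw [← Fin.castSucc_zero, Fin.snoc_castSucc, h0]

lemma IsIrredundant.strictAnti_fixingSubgroup {Ω : Type} [MulAction G Ω] {k : ℕ} {b : Fin k → Ω}
    (hb : IsIrredundant G b) :
    StrictAnti fun i : Fin (k + 1) => fixingSubgroup G (b '' {j | (j : ℕ) < i}) := by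
  intro i i' hii'
  have hi : (i : ℕ) < k := lt_of_lt_of_le hii' (Nat.lt_succ_iff.1 i'.isLt)
  obtain ⟨g, hfix, hmove⟩ := hb ⟨i, hi⟩
  refine SetLike.lt_iff_le_and_exists.2
    ⟨fixingSubgroup_antitone G Ω (Set.image_mono fun j hj => Nat.lt_trans hj hii'), g, ?_, ?_⟩
  · rw [mem_fixingSubgroup_iff]
    rintro _ ⟨j, hj, rfl⟩
    exact hfix j hj
  · rw [mem_fixingSubgroup_iff]
    exact fun hg => hmove (hg _ ⟨⟨i, hi⟩, hii', rfl⟩)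

lemma IsIrredundant.le_subgroupChainLength [Finite G] {Ω : Type} [MulAction G Ω] {k : ℕ}
    {b : Fin k → Ω} (hb : IsIrredundant G b) : k ≤ subgroupChainLength G :=
  le_subgroupChainLength_of_strictAnti hb.strictAnti_fixingSubgroup (by simp)

lemma exists_isBase_isIrredundant_of_chain [Finite G] {l : ℕ} {c : Fin (l + 1) → Subgroup G}
    (hc : StrictAnti c) (h0 : c 0 = ⊤) (hl : c (Fin.last l) = ⊥) :
    ∃ (Ω : Type) (_ : Finite Ω) (m : MulAction G Ω), ∃ b : Fin l → Ω,
      @IsBase G _ Ω m l b ∧ @IsIrredundant G _ Ω m l b := by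
  let b : Fin l → Σ i : Fin l, G ⧸ c i.succ := fun i => ⟨i, ((1 : G) : G ⧸ c i.succ)⟩
  have smul_b : ∀ (g : G) (i : Fin l), g • b i = b i ↔ g ∈ c i.succ := fun g i => by
    rw [Sigma.smul_mk, Sigma.mk.inj_iff, heq_eq_eq, ← MulAction.mem_stabilizer_iff,
      MulAction.stabilizer_quotient]
    simp
  refine ⟨_, inferInstance, inferInstance, b, fun g hg ω => ?_, fun i => ?_⟩
  · have : g ∈ c (Fin.last l) := by
      rcases Fin.eq_zero_or_eq_succ (Fin.last l) with h | ⟨i, h⟩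
      · simp [h, h0]
      · exact h ▸ (smul_b g i).1 (hg i)
    rw [hl, Subgroup.mem_bot] at this
    rw [this, one_smul]
  · obtain ⟨g, hgi, hgi'⟩ := SetLike.exists_of_lt (hc (Fin.castSucc_lt_succ (i := i)))
    refine ⟨g, fun j hj => (smul_b g j).2 (hc.antitone ?_ hgi), fun h => hgi' ((smul_b g i).1 h)⟩
    exact Fin.succ_le_castSucc_iff.2 hj

end

/-- b1(G) = l(G), the length of the longest chain of subgroups of G. -/
theorem b1_eq_subgroupChainLength (G : Type) [Group G] [Finite G] :
    b1 G = subgroupChainLength G := by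
  have hle : ∀ k ∈ {k | ∃ (Ω : Type) (_ : Finite Ω) (m : MulAction G Ω), ∃ b : Fin k → Ω,
      @IsBase G _ Ω m k b ∧ @IsIrredundant G _ Ω m k b}, k ≤ subgroupChainLength G := by
    rintro k ⟨Ω, -, m, b, -, hb⟩
    exact hb.le_subgroupChainLength
  refine le_antisymm (csSup_le' hle) (csSup_le' fun l ⟨c, hc, h0, hl⟩ => ?_)
  exact le_csSup ⟨_, hle⟩ (exists_isBase_isIrredundant_of_chain hc h0 hl)
end

section
/- Let G be a finite group acting on a finite set Ω. A base (α_1, …, α_k) for this action is minimal if and only if every re-ordering of the sequence (α_1, …, α_k) is an irredundant base. -/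
/-- a base is minimal if and only if every re-ordering of it is an
irredundant base. -/
theorem minimal_iff_all_reorderings_irredundant (G : Type) [Group G] [Finite G]
    (Ω : Type) [Finite Ω] [MulAction G Ω] {k : ℕ} (b : Fin k → Ω) (hbase : IsBase G b) :
    IsMinimal G b ↔
      ∀ σ : Equiv.Perm (Fin k), IsBase G (b ∘ σ) ∧ IsIrredundant G (b ∘ σ) := by
  constructor
  · intro hmin σ
    constructor
    · intro g hg ω
      apply hbase g _ ω
      intro i
      simpa using hg (σ.symm i)
    · intro i
      obtain ⟨g, hfix, hmove⟩ := hmin (σ i)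
      exact ⟨g, fun j hj => hfix (σ j) (fun h => absurd (σ.injective h) (ne_of_lt hj)), hmove⟩
  · intro h i
    obtain ⟨m, rfl⟩ : ∃ m, k = m + 1 :=
      ⟨k - 1, (Nat.succ_pred_eq_of_pos (Nat.pos_of_ne_zero (by rintro rfl; exact i.elim0))).symm⟩
    set σ := Equiv.swap i (Fin.last m) with hσ
    obtain ⟨-, hirr⟩ := h σ
    obtain ⟨g, hfix, hmove⟩ := hirr (Fin.last m)
    refine ⟨g, ?_, ?_⟩
    · intro j hj
      rcases eq_or_ne j (Fin.last m) with rfl | hj'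
      · have hi : i < Fin.last m := lt_of_le_of_ne (Fin.le_last i) (Ne.symm hj)
        have := hfix i hi
        rwa [Function.comp_apply, hσ, Equiv.swap_apply_left] at this
      · have := hfix j (lt_of_le_of_ne (Fin.le_last j) hj')
        rwa [Function.comp_apply, hσ, Equiv.swap_apply_of_ne_of_ne hj hj'] at this
    · rwa [Function.comp_apply, hσ, Equiv.swap_apply_right] at hmove
end

section
/- Let G be a non-abelian finite simple group. Then for every action of G on a finite set, the minimum size of a base for that action is at most the maximum, over all faithful transitive actions of G on nonempty finite sets, of the minimum base size. Consequently b3(G) equals the maximum of the minimum base size over transitive representations of G. -/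
lemma exists_base_of_faithful (G Ω : Type) [Group G] [Finite G] [MulAction G Ω]
    (hf : IsFaithfulAction G Ω) (hne : Nonempty Ω) :
    ∃ b : Fin (Nat.card G) → Ω, IsBase G b := by
  classical
  have key : ∀ g : G, ∃ ω : Ω, g ≠ 1 → g • ω ≠ ω := by
    intro g
    by_cases hg : g = 1
    · exact ⟨Classical.arbitrary Ω, fun h => absurd hg h⟩
    · have h2 : ¬ ∀ ω : Ω, g • ω = ω := fun h => hg (hf g h)
      push_neg at h2
      obtain ⟨ω, hω⟩ := h2
      exact ⟨ω, fun _ => hω⟩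
  choose f hfspec using key
  let e := Finite.equivFin G
  refine ⟨fun i => f (e.symm i), fun g hg ω => ?_⟩
  by_cases h1 : g = 1
  · simp [h1]
  · exact absurd (by simpa using hg (e g)) (hfspec g h1)

lemma minBaseSize_le_card (G Ω : Type) [Group G] [Finite G] [MulAction G Ω]
    (hf : IsFaithfulAction G Ω) (hne : Nonempty Ω) :
    minBaseSize G Ω ≤ Nat.card G :=
  Nat.sInf_le (exists_base_of_faithful G Ω hf hne)

lemma fixing_orbit_normal (G Ω : Type) [Group G] [MulAction G Ω] (x : Ω) :
    (fixingSubgroup G (MulAction.orbit G x)).Normal := by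
  constructor
  intro n hn h
  rw [mem_fixingSubgroup_iff] at hn ⊢
  intro y hy
  obtain ⟨a, rfl⟩ := MulAction.mem_orbit_iff.mp hy
  have h1 : h⁻¹ • a • x ∈ MulAction.orbit G x := by
    rw [← mul_smul]; exact MulAction.mem_orbit x _
  calc (h * n * h⁻¹) • a • x = h • n • h⁻¹ • a • x := by rw [mul_smul, mul_smul]
    _ = h • h⁻¹ • a • x := by rw [hn _ h1]
    _ = a • x := by rw [← mul_smul]; simp

/-- for a non-abelian finite simple group G, the minimum base size of any
action on a finite set is at most the maximum of the minimum base sizes over all faithful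
transitive actions on nonempty finite sets; consequently b3(G) equals the maximum of the
minimum base size over the transitive representations of G. -/
theorem b3_via_transitive (G : Type) [Group G] [Finite G]
    (hsimple : IsSimpleGroup G) (hnonab : ¬ ∀ a b : G, a * b = b * a) :
    (∀ (Ω : Type) (_ : Finite Ω) (m : MulAction G Ω),
      @minBaseSize G _ Ω m ≤
        sSup {k | ∃ (Ω' : Type) (_ : Finite Ω') (m' : MulAction G Ω'), Nonempty Ω' ∧
          @IsFaithfulAction G Ω' _ m' ∧ @IsTransitiveAction G Ω' _ m' ∧
          k = @minBaseSize G _ Ω' m'}) ∧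
    b3 G = sSup {k | ∃ (Ω' : Type) (_ : Finite Ω') (m' : MulAction G Ω'), Nonempty Ω' ∧
      @IsTransitiveAction G Ω' _ m' ∧ k = @minBaseSize G _ Ω' m'} := by
  classical
  set FT := {k | ∃ (Ω' : Type) (_ : Finite Ω') (m' : MulAction G Ω'), Nonempty Ω' ∧
      @IsFaithfulAction G Ω' _ m' ∧ @IsTransitiveAction G Ω' _ m' ∧
      k = @minBaseSize G _ Ω' m'} with hFT
  set T := {k | ∃ (Ω' : Type) (_ : Finite Ω') (m' : MulAction G Ω'), Nonempty Ω' ∧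
      @IsTransitiveAction G Ω' _ m' ∧ k = @minBaseSize G _ Ω' m'} with hT
  -- FT is bounded above by |G|
  have hFTub : Nat.card G ∈ upperBounds FT := by
    rintro k ⟨Ω', _, m', hne', hfa', _, rfl⟩
    exact minBaseSize_le_card G Ω' hfa' hne'
  have hFTbdd : BddAbove FT := ⟨Nat.card G, hFTub⟩
  -- Part 1
  have part1 : ∀ (Ω : Type) (_ : Finite Ω) (m : MulAction G Ω),
      @minBaseSize G _ Ω m ≤ sSup FT := by
    intro Ω _ m
    by_cases hex : ∃ x : Ω, fixingSubgroup G (MulAction.orbit G x) = ⊥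
    · obtain ⟨x, hx⟩ := hex
      set O := MulAction.orbit G x with hO
      have hneO : Nonempty O := ⟨⟨x, MulAction.mem_orbit_self x⟩⟩
      have hfaith : IsFaithfulAction G O := by
        intro g hg
        have hmem : g ∈ fixingSubgroup G (MulAction.orbit G x) := by
          rw [mem_fixingSubgroup_iff]
          intro y hy
          exact congrArg Subtype.val (hg ⟨y, hy⟩)
        rw [hx] at hmem
        exact Subgroup.mem_bot.mp hmem
      have htrans : IsTransitiveAction G O := by
        rintro ⟨y, hy⟩ ⟨z, hz⟩
        obtain ⟨a, rfl⟩ := MulAction.mem_orbit_iff.mp hy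
        obtain ⟨b, rfl⟩ := MulAction.mem_orbit_iff.mp hz
        refine ⟨b * a⁻¹, Subtype.ext ?_⟩
        show (b * a⁻¹) • a • x = b • x
        rw [← mul_smul, mul_assoc]
        simp
      have hbne : {k | ∃ b : Fin k → O, IsBase G b}.Nonempty :=
        ⟨_, exists_base_of_faithful G O hfaith hneO⟩
      obtain ⟨b', hb'⟩ := Nat.sInf_mem hbne
      have hle1 : minBaseSize G Ω ≤ minBaseSize G O := by
        refine Nat.sInf_le ⟨fun i => (b' i : Ω), ?_⟩
        intro g hg ω
        have hg' : ∀ i, g • b' i = b' i := fun i => Subtype.ext (hg i)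
        have hone : g = 1 := hfaith g (hb' g hg')
        simp [hone]
      have hmem : minBaseSize G O ∈ FT :=
        ⟨O, inferInstance, inferInstance, hneO, hfaith, htrans, rfl⟩
      exact hle1.trans (le_csSup hFTbdd hmem)
    · have htriv : ∀ (g : G) (ω : Ω), g • ω = ω := by
        intro g ω
        have hnn := (fixing_orbit_normal G Ω ω).eq_bot_or_eq_top
        have hne := not_exists.mp hex ω
        have htop : fixingSubgroup G (MulAction.orbit G ω) = ⊤ := hnn.resolve_left hne
        have : g ∈ fixingSubgroup G (MulAction.orbit G ω) := htop ▸ Subgroup.mem_top g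
        exact (mem_fixingSubgroup_iff G).mp this ω (MulAction.mem_orbit_self ω)
      have h0 : minBaseSize G Ω ≤ 0 :=
        Nat.sInf_le ⟨Fin.elim0, fun g _ ω => htriv g ω⟩
      exact h0.trans (Nat.zero_le _)
  -- regular action shows FT nonempty
  have hregmem : minBaseSize G G ∈ FT := by
    refine ⟨G, inferInstance, inferInstance, ⟨1⟩, ?_, ?_, rfl⟩
    · intro g hg
      simpa using hg 1
    · intro a b
      exact ⟨b * a⁻¹, by simp [smul_eq_mul, mul_assoc]⟩
  have hFTne : FT.Nonempty := ⟨_, hregmem⟩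
  have hFTsubT : FT ⊆ T := by
    rintro k ⟨Ω', i1, m', hne', _, ht', hk⟩
    exact ⟨Ω', i1, m', hne', ht', hk⟩
  have hsupFTcard : sSup FT ≤ Nat.card G := csSup_le' hFTub
  have hTbdd : BddAbove T := by
    refine ⟨Nat.card G, ?_⟩
    rintro k ⟨Ω', i1, m', _, _, rfl⟩
    exact (part1 Ω' i1 m').trans hsupFTcard
  have hTne : T.Nonempty := ⟨_, hFTsubT hregmem⟩
  -- S3
  set S3 := {k | ∃ (Ω : Type) (_ : Finite Ω) (m : MulAction G Ω), k = @minBaseSize G _ Ω m} with hS3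
  have hS3bdd : BddAbove S3 := by
    refine ⟨Nat.card G, ?_⟩
    rintro k ⟨Ω, i1, m, rfl⟩
    exact (part1 Ω i1 m).trans hsupFTcard
  have hTsubS3 : T ⊆ S3 := by
    rintro k ⟨Ω', i1, m', _, _, hk⟩
    exact ⟨Ω', i1, m', hk⟩
  refine ⟨part1, le_antisymm ?_ (csSup_le_csSup hS3bdd hTne hTsubS3)⟩
  refine csSup_le' ?_
  rintro k ⟨Ω, i1, m, rfl⟩
  exact (part1 Ω i1 m).trans (csSup_le_csSup hTbdd hFTne hFTsubT)
end

section
/- Let G be a finite group and n a natural number. Then the Boolean lattice B(n) is embeddable as a meet-semilattice in the subgroup lattice of G if and only if it is embeddable as a join-semilattice in the subgroup lattice of G. -/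
/-- B(n) is embeddable as a meet-semilattice in the subgroup lattice of G
if and only if it is embeddable as a join-semilattice. -/
theorem meetEmbedding_iff_joinEmbedding (G : Type) [Group G] [Finite G] (n : ℕ) :
    (∃ f : Finset (Fin n) → Subgroup G, IsMeetEmbedding G n f) ↔
      (∃ f : Finset (Fin n) → Subgroup G, IsJoinEmbedding G n f) := by
  constructor
  · rintro ⟨g, ginj, g0, gmeet⟩
    have hle : ∀ (I : Finset (Fin n)) (i : Fin n), i ∈ I → g I ≤ g {i} := by
      intro I i hi
      have hu : ({i} : Finset (Fin n)) ∪ I = I :=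
        Finset.union_eq_right.mpr (Finset.singleton_subset_iff.mpr hi)
      calc g I = g ({i} ∪ I) := by rw [hu]
        _ = g {i} ⊓ g I := gmeet _ _
        _ ≤ g {i} := inf_le_left
    have hpick : ∀ i : Fin n, ∃ x : G, x ∈ g (Finset.univ.erase i) ∧ x ∉ g {i} := by
      intro i
      by_contra h
      push_neg at h
      have hle2 : g (Finset.univ.erase i) ≤ g {i} := h
      have heq : g Finset.univ = g (Finset.univ.erase i) := by
        have hu : Finset.univ.erase i ∪ {i} = Finset.univ := by
          ext j; by_cases hj : j = i <;> simp [hj]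
        calc g Finset.univ = g (Finset.univ.erase i ∪ {i}) := by rw [hu]
          _ = g (Finset.univ.erase i) ⊓ g {i} := gmeet _ _
          _ = g (Finset.univ.erase i) := inf_eq_left.mpr hle2
      have := ginj heq
      have : i ∈ Finset.univ.erase i := this ▸ Finset.mem_univ i
      simp at this
    choose x hx1 hx2 using hpick
    have hxmem : ∀ i j : Fin n, j ≠ i → x j ∈ g {i} := by
      intro i j hji
      exact hle (Finset.univ.erase j) i (by simp [Ne.symm hji]) (hx1 j)
    set F : Finset (Fin n) → Subgroup G :=
      fun I => I.sup (fun i => Subgroup.closure {x i}) with hF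
    have hmemF : ∀ (I : Finset (Fin n)) (i : Fin n), i ∈ I → x i ∈ F I := by
      intro I i hi
      exact Finset.le_sup (f := fun i => Subgroup.closure {x i}) hi
        (Subgroup.subset_closure rfl)
    have hFle : ∀ (J : Finset (Fin n)) (i : Fin n), i ∉ J → F J ≤ g {i} := by
      intro J i hi
      refine Finset.sup_le fun j hj => ?_
      refine (Subgroup.closure_le _).mpr ?_
      rintro y rfl
      exact hxmem i j (fun h => hi (h ▸ hj))
    have key : ∀ (I J : Finset (Fin n)) (i : Fin n), i ∈ I → i ∉ J → F I ≠ F J := by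
      intro I J i hiI hiJ hq
      exact hx2 i (hFle J i hiJ (hq ▸ hmemF I i hiI))
    refine ⟨F, ?_, Finset.sup_empty, fun I J => Finset.sup_union⟩
    intro I J hIJ
    by_contra hne
    obtain ⟨i, hi⟩ := Finset.symmDiff_nonempty.mpr hne
    rcases Finset.mem_symmDiff.mp hi with ⟨h1, h2⟩ | ⟨h1, h2⟩
    · exact key I J i h1 h2 hIJ
    · exact key J I i h1 h2 hIJ.symm
  · rintro ⟨f, finj, f0, fjoin⟩
    have hle : ∀ (I : Finset (Fin n)) (i : Fin n), i ∈ I → f {i} ≤ f I := by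
      intro I i hi
      have hu : ({i} : Finset (Fin n)) ∪ I = I :=
        Finset.union_eq_right.mpr (Finset.singleton_subset_iff.mpr hi)
      calc f {i} ≤ f {i} ⊔ f I := le_sup_left
        _ = f ({i} ∪ I) := (fjoin _ _).symm
        _ = f I := by rw [hu]
    have hpick : ∀ i : Fin n, ∃ y : G, y ∈ f {i} ∧ y ∉ f (Finset.univ.erase i) := by
      intro i
      by_contra h
      push_neg at h
      have hle2 : f {i} ≤ f (Finset.univ.erase i) := h
      have heq : f Finset.univ = f (Finset.univ.erase i) := by
        have hu : Finset.univ.erase i ∪ {i} = Finset.univ := by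
          ext j; by_cases hj : j = i <;> simp [hj]
        calc f Finset.univ = f (Finset.univ.erase i ∪ {i}) := by rw [hu]
          _ = f (Finset.univ.erase i) ⊔ f {i} := fjoin _ _
          _ = f (Finset.univ.erase i) := sup_eq_left.mpr hle2
      have := finj heq
      have : i ∈ Finset.univ.erase i := this ▸ Finset.mem_univ i
      simp at this
    choose x hx1 hx2 using hpick
    have hxmem : ∀ i j : Fin n, j ≠ i → x i ∈ f (Finset.univ.erase j) := by
      intro i j hji
      exact hle (Finset.univ.erase j) i (by simp [hji.symm]) (hx1 i)
    set F : Finset (Fin n) → Subgroup G :=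
      fun I => I.inf (fun i => f (Finset.univ.erase i)) with hF
    have hmemF : ∀ (J : Finset (Fin n)) (i : Fin n), i ∉ J → x i ∈ F J := by
      intro J i hiJ
      have : ∀ j ∈ J, x i ∈ f (Finset.univ.erase j) := by
        intro j hj
        exact hxmem i j (fun h => hiJ (h ▸ hj))
      simp only [hF, Finset.inf_eq_iInf]
      rw [Subgroup.mem_iInf]
      intro j
      rw [Subgroup.mem_iInf]
      intro hj
      exact this j hj
    have hFle : ∀ (I : Finset (Fin n)) (i : Fin n), i ∈ I → F I ≤ f (Finset.univ.erase i) := by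
      intro I i hi
      exact Finset.inf_le hi
    have key : ∀ (I J : Finset (Fin n)) (i : Fin n), i ∈ I → i ∉ J → F I ≠ F J := by
      intro I J i hiI hiJ hq
      exact hx2 i (hFle I i hiI (hq ▸ hmemF J i hiJ))
    refine ⟨F, ?_, Finset.inf_empty, fun I J => Finset.inf_union⟩
    intro I J hIJ
    by_contra hne
    obtain ⟨i, hi⟩ := Finset.symmDiff_nonempty.mpr hne
    rcases Finset.mem_symmDiff.mp hi with ⟨h1, h2⟩ | ⟨h1, h2⟩
    · exact key I J i h1 h2 hIJ
    · exact key J I i h1 h2 hIJ.symm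
end

section
/- Let G be a finite group and let g_1, …, g_n be distinct elements forming an independent subset of G. Then the map sending each subset I of {1,…,n} to the subgroup ⟨g_i : i ∈ I⟩ generated by the corresponding elements is an embedding of the Boolean lattice B(n) as a join-semilattice in the subgroup lattice of G. -/
namespace Subgroup

variable {ι G : Type*} [Group G] {g : ι → G}

theorem subset_of_closure_image_le (hind : ∀ i, g i ∉ closure (g '' {j | j ≠ i}))
    {s t : Set ι} (h : closure (g '' s) ≤ closure (g '' t)) : s ⊆ t := by
  intro i hi
  by_contra hit
  have hmem : g i ∈ closure (g '' t) := h (subset_closure (Set.mem_image_of_mem g hi))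
  have hsub : t ⊆ {j | j ≠ i} := fun j hj hji => hit (hji ▸ hj)
  exact hind i (closure_mono (Set.image_mono hsub) hmem)

theorem closure_image_injective (hind : ∀ i, g i ∉ closure (g '' {j | j ≠ i})) :
    Function.Injective fun s : Set ι => closure (g '' s) := fun _ _ h =>
  (subset_of_closure_image_le hind h.le).antisymm (subset_of_closure_image_le hind h.ge)

theorem closure_image_union (s t : Set ι) :
    closure (g '' (s ∪ t)) = closure (g '' s) ⊔ closure (g '' t) := by
  rw [Set.image_union, closure_union]

end Subgroup

theorem independent_gives_joinEmbedding_general (G : Type) [Group G] (n : ℕ)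
    (g : Fin n → G)
    (hind : ∀ i : Fin n, g i ∉ Subgroup.closure (g '' {j | j ≠ i})) :
    IsJoinEmbedding G n (fun I : Finset (Fin n) =>
      Subgroup.closure (g '' (I : Set (Fin n)))) := by
  refine ⟨(Subgroup.closure_image_injective hind).comp Finset.coe_injective, by simp, ?_⟩
  intro I J
  simp only [Finset.coe_union, Subgroup.closure_image_union]

/-- an independent family of n distinct elements gives a join-semilattice
embedding of B(n) via I ↦ ⟨g_i : i ∈ I⟩. -/
theorem independent_gives_joinEmbedding (G : Type) [Group G] [Finite G] (n : ℕ)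
    (g : Fin n → G) (hinj : Function.Injective g)
    (hind : ∀ i : Fin n, g i ∉ Subgroup.closure (g '' {j | j ≠ i})) :
    IsJoinEmbedding G n (fun I : Finset (Fin n) =>
      Subgroup.closure (g '' (I : Set (Fin n)))) :=
  independent_gives_joinEmbedding_general G n g hind
end

section
/- Let G be a finite group. If the Boolean lattice B(n) is embeddable as a join-semilattice in the subgroup lattice of G, then G contains an independent subset of size n. Hence the largest n such that B(n) is embeddable as a join-semilattice in the subgroup lattice of G equals μ'(G). -/
lemma joinEmb_indep (G : Type) [Group G] (n : ℕ) (f : Finset (Fin n) → Subgroup G)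
    (hf : IsJoinEmbedding G n f) :
    ∃ S : Finset G, S.card = n ∧ IsIndependent G S := by
  classical
  obtain ⟨hinj, hbot, hjoin⟩ := hf
  have hmono : ∀ I J : Finset (Fin n), I ⊆ J → f I ≤ f J := by
    intro I J hIJ
    have h1 : I ∪ J = J := Finset.union_eq_right.mpr hIJ
    calc f I ≤ f I ⊔ f J := le_sup_left
      _ = f (I ∪ J) := (hjoin I J).symm
      _ = f J := by rw [h1]
  have hex : ∀ i : Fin n, ∃ g : G, g ∈ f {i} ∧ g ∉ f {i}ᶜ := by
    intro i
    by_contra h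
    push_neg at h
    have hle : f {i} ≤ f {i}ᶜ := fun g hg => h g hg
    have h3 : f ({i}ᶜ ∪ {i}) = f {i}ᶜ := by
      rw [hjoin]; exact sup_eq_left.mpr hle
    have h2 : ({i}ᶜ ∪ {i} : Finset (Fin n)) = {i}ᶜ := hinj h3
    have h4 : i ∈ ({i}ᶜ : Finset (Fin n)) := by
      rw [← h2]; simp
    simp at h4
  choose g hg hgc using hex
  have hmem : ∀ i j : Fin n, j ≠ i → g j ∈ f {i}ᶜ := by
    intro i j hji
    exact hmono {j} {i}ᶜ (by simp [hji.symm]) (hg j)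
  have ginj : Function.Injective g := by
    intro i j hij
    by_contra hne
    exact hgc i (hij ▸ hmem i j (Ne.symm hne))
  refine ⟨Finset.image g Finset.univ, ?_, ?_⟩
  · rw [Finset.card_image_of_injective _ ginj, Finset.card_univ, Fintype.card_fin]
  · intro x hx
    obtain ⟨i, _, rfl⟩ := Finset.mem_image.mp hx
    intro hcl
    apply hgc i
    refine Subgroup.closure_le (f {i}ᶜ) |>.mpr ?_ hcl
    rintro y ⟨hyS, hyne⟩
    obtain ⟨j, _, rfl⟩ := Finset.mem_image.mp hyS
    have : j ≠ i := fun h => hyne (by simp [h])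
    exact hmem i j this

lemma indep_joinEmb (G : Type) [Group G] (n : ℕ) (S : Finset G)
    (hcard : S.card = n) (hind : IsIndependent G S) :
    ∃ f : Finset (Fin n) → Subgroup G, IsJoinEmbedding G n f := by
  have e : Fin n ≃ S := (S.equivFin.trans (finCongr hcard)).symm
  set g : Fin n → G := fun i => (e i : G) with hgdef
  have ginj : Function.Injective g := fun i j h => e.injective (Subtype.ext h)
  have gS : ∀ i, g i ∈ S := fun i => (e i).2
  refine ⟨fun I => Subgroup.closure (g '' ↑I), ?_, ?_, ?_⟩
  · have key : ∀ I J : Finset (Fin n),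
        Subgroup.closure (g '' ↑I) ≤ Subgroup.closure (g '' ↑J) → I ⊆ J := by
      intro I J hle i hi
      by_contra hij
      apply hind (g i) (gS i)
      have h1 : g i ∈ Subgroup.closure (g '' ↑J) :=
        hle (Subgroup.subset_closure ⟨i, hi, rfl⟩)
      refine Subgroup.closure_mono ?_ h1
      rintro y ⟨j, hj, rfl⟩
      exact ⟨gS j, fun h => hij (by rwa [ginj (Set.mem_singleton_iff.mp h)] at hj)⟩
    intro I J h
    exact Finset.Subset.antisymm (key I J h.le) (key J I h.ge)
  · simp
  · intro I J
    show Subgroup.closure (g '' ↑(I ∪ J)) = _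
    rw [Finset.coe_union, Set.image_union, Subgroup.closure_union]

/-- a join-semilattice embedding of B(n) yields an independent subset of
size n; hence the largest n with B(n) embeddable as a join-semilattice equals μ'(G). -/
theorem joinEmbedding_gives_independent (G : Type) [Group G] [Finite G] :
    (∀ (n : ℕ) (f : Finset (Fin n) → Subgroup G), IsJoinEmbedding G n f →
      ∃ S : Finset G, S.card = n ∧ IsIndependent G S) ∧
    sSup {n | ∃ f : Finset (Fin n) → Subgroup G, IsJoinEmbedding G n f} =
      maxIndependent G := by
  constructor
  · exact joinEmb_indep G
  · have hset : {n | ∃ f : Finset (Fin n) → Subgroup G, IsJoinEmbedding G n f} =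
        {n | ∃ S : Finset G, S.card = n ∧ IsIndependent G S} := by
      ext n
      constructor
      · rintro ⟨f, hf⟩
        exact joinEmb_indep G n f hf
      · rintro ⟨S, hcard, hind⟩
        exact indep_joinEmb G n S hcard hind
    rw [maxIndependent, hset]
end

section
/- Let G be a finite group acting on a finite set Ω and let (α_1, …, α_n) be a minimal base for this action. Then the map sending each subset I of {1,…,n} to the subgroup ∩_{i ∈ I} G_{α_i} (the intersection of the point stabilisers, with the empty intersection equal to G) is an embedding of the Boolean lattice B(n) as a meet-semilattice in the subgroup lattice of G whose minimal element, the image of {1,…,n}, is a normal subgroup of G (namely the kernel of the action). -/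
/-- a minimal base (α_1,…,α_n) gives a meet-semilattice embedding of B(n) by
I ↦ ∩_{i ∈ I} G_{α_i}, whose minimal element is the kernel of the action, a normal
subgroup of G. -/
theorem minimal_base_gives_meetEmbedding (G : Type) [Group G] [Finite G]
    (Ω : Type) [Finite Ω] [MulAction G Ω] {n : ℕ} (b : Fin n → Ω)
    (hbase : IsBase G b) (hmin : IsMinimal G b) :
    IsMeetEmbedding G n (fun I : Finset (Fin n) => ⨅ i ∈ I, MulAction.stabilizer G (b i)) ∧
      (⨅ i ∈ (Finset.univ : Finset (Fin n)), MulAction.stabilizer G (b i)) =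
        (MulAction.toPermHom G Ω).ker ∧
      ((⨅ i ∈ (Finset.univ : Finset (Fin n)), MulAction.stabilizer G (b i)) : Subgroup G).Normal := by
  have hmem : ∀ (I : Finset (Fin n)) (g : G),
      g ∈ (⨅ i ∈ I, MulAction.stabilizer G (b i)) ↔ ∀ i ∈ I, g • b i = b i := by
    intro I g
    simp [Subgroup.mem_iInf, MulAction.mem_stabilizer_iff]
  have hsub : ∀ I J : Finset (Fin n),
      (⨅ i ∈ I, MulAction.stabilizer G (b i)) = (⨅ i ∈ J, MulAction.stabilizer G (b i)) →
      I ⊆ J := by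
    intro I J h i hiI
    by_contra hiJ
    obtain ⟨g, hg1, hg2⟩ := hmin i
    have hgJ : g ∈ (⨅ j ∈ J, MulAction.stabilizer G (b j)) := by
      rw [hmem]
      intro j hj
      exact hg1 j (fun e => hiJ (e ▸ hj))
    rw [← h, hmem] at hgJ
    exact hg2 (hgJ i hiI)
  refine ⟨⟨fun I J h => le_antisymm (hsub I J h) (hsub J I h.symm), by simp, ?_⟩, ?_, ?_⟩
  · intro I J
    simp only []
    rw [Finset.iInf_union]
  · apply le_antisymm
    · intro g hg
      rw [hmem] at hg
      rw [MonoidHom.mem_ker]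
      ext ω
      exact hbase g (fun i => hg i (Finset.mem_univ i)) ω
    · intro g hg
      rw [hmem]
      intro i _
      rw [MonoidHom.mem_ker] at hg
      have := congrArg (fun p => p (b i)) hg
      simpa using this
  · have h : (⨅ i ∈ (Finset.univ : Finset (Fin n)), MulAction.stabilizer G (b i)) =
        (MulAction.toPermHom G Ω).ker := by
      apply le_antisymm
      · intro g hg
        rw [hmem] at hg
        rw [MonoidHom.mem_ker]
        ext ω
        exact hbase g (fun i => hg i (Finset.mem_univ i)) ω
      · intro g hg
        rw [hmem]
        intro i _
        rw [MonoidHom.mem_ker] at hg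
        have := congrArg (fun p => p (b i)) hg
        simpa using this
    rw [h]
    exact MonoidHom.normal_ker _
end

section
/- Let G be a finite group and let f be an embedding of the Boolean lattice B(n) as a meet-semilattice in the subgroup lattice of G such that f({1,…,n}) is a normal subgroup of G. Then the action of G on the disjoint union of the coset spaces G/f({i}) for i = 1,…,n admits a minimal base of size n, namely the points given by the trivial cosets f({i}) in G/f({i}). Consequently b2(G) equals the largest n such that B(n) embeds as a meet-semilattice in the subgroup lattice of G with normal minimal element. -/
section Aux
variable {G : Type} [Group G]

lemma f_anti {n : ℕ} {f : Finset (Fin n) → Subgroup G}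
    (h3 : ∀ I J, f (I ∪ J) = f I ⊓ f J) {I J : Finset (Fin n)} (h : J ⊆ I) : f I ≤ f J := by
  have : f I = f I ⊓ f J := by rw [← h3, Finset.union_eq_left.mpr h]
  rw [this]; exact inf_le_right

lemma mem_f_of_forall {n : ℕ} {f : Finset (Fin n) → Subgroup G}
    (h2 : f ∅ = ⊤) (h3 : ∀ I J, f (I ∪ J) = f I ⊓ f J) {g : G} (I : Finset (Fin n))
    (h : ∀ i ∈ I, g ∈ f {i}) : g ∈ f I := by
  induction I using Finset.induction_on with
  | empty => rw [h2]; trivial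
  | @insert i I hi ih =>
      rw [Finset.insert_eq, h3]
      exact ⟨h _ (by simp), ih fun j hj => h j (by simp [hj])⟩

lemma part1 (G : Type) [Group G] (n : ℕ) (f : Finset (Fin n) → Subgroup G)
    (hf : IsMeetEmbedding G n f) (hN : (f Finset.univ).Normal) :
    IsBase G (fun i : Fin n => (⟨i, QuotientGroup.mk 1⟩ : Σ i : Fin n, G ⧸ f {i})) ∧
      IsMinimal G (fun i : Fin n => (⟨i, QuotientGroup.mk 1⟩ : Σ i : Fin n, G ⧸ f {i})) := by
  obtain ⟨h1, h2, h3⟩ := hf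
  constructor
  · intro g hg ω
    have hmem : g⁻¹ ∈ f Finset.univ := by
      apply mem_f_of_forall h2 h3
      intro i _
      have h : (⟨i, (QuotientGroup.mk (g * 1) : G ⧸ f {i})⟩ : Σ j : Fin n, G ⧸ f {j}) =
          ⟨i, QuotientGroup.mk 1⟩ := hg i
      simp only [Sigma.mk.inj_iff, heq_eq_eq, true_and] at h
      rw [QuotientGroup.eq] at h
      simpa using h
    obtain ⟨i, q⟩ := ω
    induction q using QuotientGroup.induction_on with
    | H x =>
      show (⟨i, g • QuotientGroup.mk x⟩ : Σ i : Fin n, G ⧸ f {i}) = ⟨i, QuotientGroup.mk x⟩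
      congr 1
      rw [show g • (QuotientGroup.mk x : G ⧸ f {i}) = QuotientGroup.mk (g * x) from rfl,
        QuotientGroup.eq]
      have : x⁻¹ * g⁻¹ * x ∈ f Finset.univ := by
        have := hN.conj_mem _ hmem x⁻¹
        simpa [mul_assoc] using this
      have h4 : f Finset.univ ≤ f {i} := f_anti h3 (Finset.subset_univ _)
      have := h4 this
      simpa [mul_assoc] using this
  · intro i
    have hne : ¬ f (Finset.univ.erase i) ≤ f {i} := by
      intro hle
      have heq : f Finset.univ = f (Finset.univ.erase i) := by
        have : Finset.univ.erase i ∪ {i} = Finset.univ := by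
          ext j; by_cases hj : j = i <;> simp [hj]
        nth_rewrite 1 [← this]
        rw [h3]
        exact le_antisymm inf_le_left (le_inf le_rfl hle)
      have he : Finset.univ = Finset.univ.erase i := h1 heq
      have hi : i ∈ Finset.univ.erase i := by rw [← he]; exact Finset.mem_univ i
      simp at hi
    obtain ⟨g, hg1, hg2⟩ := SetLike.not_le_iff_exists.mp hne
    refine ⟨g, ?_, ?_⟩
    · intro j hj
      show (⟨j, g • QuotientGroup.mk 1⟩ : Σ i : Fin n, G ⧸ f {i}) = ⟨j, QuotientGroup.mk 1⟩
      congr 1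
      rw [show g • (QuotientGroup.mk 1 : G ⧸ f {j}) = QuotientGroup.mk (g * 1) from rfl,
        QuotientGroup.eq]
      have : f (Finset.univ.erase i) ≤ f {j} := f_anti h3 (by simp [hj])
      simpa using (f {j}).inv_mem (this hg1)
    · intro hcon
      have h : (⟨i, (QuotientGroup.mk (g * 1) : G ⧸ f {i})⟩ : Σ j : Fin n, G ⧸ f {j}) =
          ⟨i, QuotientGroup.mk 1⟩ := hcon
      simp only [Sigma.mk.inj_iff, heq_eq_eq, true_and] at h
      rw [QuotientGroup.eq] at h
      exact hg2 (by simpa using (f {i}).inv_mem (by simpa using h))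

end Aux

/-- a meet-semilattice embedding of B(n) with normal minimal element gives a
minimal base of size n for the action on the disjoint union of the coset spaces G/f({i});
consequently b2(G) is the largest such n. -/
theorem meetEmbedding_gives_minimal_base (G : Type) [Group G] [Finite G] :
    (∀ (n : ℕ) (f : Finset (Fin n) → Subgroup G), IsMeetEmbedding G n f →
      (f Finset.univ).Normal →
      IsBase G (fun i : Fin n => (⟨i, QuotientGroup.mk 1⟩ : Σ i : Fin n, G ⧸ f {i})) ∧
        IsMinimal G (fun i : Fin n => (⟨i, QuotientGroup.mk 1⟩ : Σ i : Fin n, G ⧸ f {i}))) ∧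
    b2 G = sSup {n | ∃ f : Finset (Fin n) → Subgroup G,
      IsMeetEmbedding G n f ∧ (f Finset.univ).Normal} := by
  refine ⟨fun n f hf hN => part1 G n f hf hN, ?_⟩
  unfold b2
  congr 1
  ext k
  constructor
  · rintro ⟨Ω, hΩ, m, b, hbase, hmin⟩
    refine ⟨fun I => ⨅ i ∈ I, @MulAction.stabilizer G Ω _ m (b i), ⟨?_, ?_, ?_⟩, ?_⟩
    · -- injective
      intro I J hIJ
      have key : ∀ I J : Finset (Fin k), (⨅ i ∈ I, @MulAction.stabilizer G Ω _ m (b i)) =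
          (⨅ i ∈ J, @MulAction.stabilizer G Ω _ m (b i)) → ∀ i ∈ I, i ∈ J := by
        intro I J hIJ i hiI
        by_contra hiJ
        obtain ⟨g, hg1, hg2⟩ := hmin i
        have hgJ : g ∈ ⨅ j ∈ J, @MulAction.stabilizer G Ω _ m (b j) := by
          simp only [Subgroup.mem_iInf]
          intro j hj
          exact hg1 j (fun h => hiJ (h ▸ hj))
        rw [← hIJ] at hgJ
        simp only [Subgroup.mem_iInf] at hgJ
        exact hg2 (hgJ i hiI)
      ext i
      exact ⟨key I J hIJ i, key J I hIJ.symm i⟩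
    · simp
    · intro I J
      ext g
      simp only [Subgroup.mem_iInf, Subgroup.mem_inf, Finset.mem_union]
      constructor
      · intro h; exact ⟨fun i hi => h i (Or.inl hi), fun i hi => h i (Or.inr hi)⟩
      · rintro ⟨h1, h2⟩ i (hi | hi); exacts [h1 i hi, h2 i hi]
    · -- normal
      constructor
      intro x hx g
      simp only [Subgroup.mem_iInf, MulAction.mem_stabilizer_iff] at hx ⊢
      intro i _
      have hfix : ∀ ω : Ω, x • ω = ω := hbase x (fun i => hx i (Finset.mem_univ i))
      calc (g * x * g⁻¹) • b i = g • x • g⁻¹ • b i := by rw [mul_smul, mul_smul]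
        _ = g • g⁻¹ • b i := by rw [hfix]
        _ = b i := by rw [← mul_smul]; simp
  · rintro ⟨f, hf, hN⟩
    refine ⟨Σ i : Fin k, G ⧸ f {i}, inferInstance, inferInstance,
      fun i => ⟨i, QuotientGroup.mk 1⟩, part1 G k f hf hN⟩
end

section
/- For every finite group G, b2(G) ≤ μ'(G): the maximum over all permutation representations of G of the maximum size of a minimal base is at most the maximum size of an independent subset of G. -/
/-- b2(G) ≤ μ'(G) for every finite group G. -/
theorem b2_le_maxIndependent (G : Type) [Group G] [Finite G] :
    b2 G ≤ maxIndependent G := by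
  classical
  have : Fintype G := Fintype.ofFinite G
  have hbdd : BddAbove {n | ∃ S : Finset G, S.card = n ∧ IsIndependent G S} := by
    refine ⟨Fintype.card G, ?_⟩
    rintro n ⟨S, rfl, -⟩
    exact Finset.card_le_univ S
  have h0 : (0 : ℕ) ∈ {k | ∃ (Ω : Type) (_ : Finite Ω) (m : MulAction G Ω), ∃ b : Fin k → Ω,
      @IsBase G _ Ω m k b ∧ @IsMinimal G _ Ω m k b} := by
    have m0 : MulAction G PUnit :=
      { smul := fun _ p => p, one_smul := fun _ => rfl, mul_smul := fun _ _ _ => rfl }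
    exact ⟨PUnit, inferInstance, m0, Fin.elim0, fun g _ ω => rfl, fun i => i.elim0⟩
  refine csSup_le_csSup hbdd ⟨0, h0⟩ ?_
  rintro k ⟨Ω, hfin, m, b, hbase, hmin⟩
  letI : MulAction G Ω := m
  choose g hg1 hg2 using hmin
  have ginj : Function.Injective g := by
    intro i j hij
    by_contra hne
    exact hg2 i (by rw [hij]; exact hg1 j i hne)
  refine ⟨Finset.image g Finset.univ, by
    rw [Finset.card_image_of_injective _ ginj, Finset.card_univ, Fintype.card_fin], ?_⟩
  intro x hx hmem
  obtain ⟨i, -, rfl⟩ := Finset.mem_image.mp hx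
  have hle : Subgroup.closure ((↑(Finset.image g Finset.univ) : Set G) \ {g i}) ≤
      MulAction.stabilizer G (b i) := by
    rw [Subgroup.closure_le]
    rintro x ⟨hxS, hxne⟩
    obtain ⟨j, -, rfl⟩ := Finset.mem_image.mp hxS
    have hji : i ≠ j := by rintro rfl; exact hxne rfl
    exact hg1 j i hji
  exact hg2 i (hle hmem)
end

section
/- Let Q_8 be the quaternion group of order 8. Then the Boolean lattice B(2) is embeddable both as a meet-semilattice and as a join-semilattice in the subgroup lattice of Q_8, but B(2) is not embeddable as a lattice: there is no injective map f from the subsets of {1,2} to the subgroups of Q_8 with f(∅) the trivial subgroup, f({1,2}) = Q_8, f({1,2}) the subgroup generated by f({1}) and f({2}), and f(∅) = f({1}) ∩ f({2}); equivalently, there are no nontrivial proper subgroups A, B of Q_8 with A ∩ B trivial and ⟨A, B⟩ = Q_8. -/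
theorem Finset.sup_injective_of_not_le_sup {α ι : Type*} [SemilatticeSup α] [OrderBot α]
    {g : ι → α} (hg : ∀ i (I : Finset ι), i ∉ I → ¬ g i ≤ I.sup g) :
    Function.Injective fun I : Finset ι ↦ I.sup g := by
  have subset : ∀ {I J : Finset ι}, I.sup g = J.sup g → I ⊆ J := fun h i hi ↦
    by_contra fun hj ↦ hg i _ hj (h ▸ le_sup hi)
  exact fun I J h ↦ (subset h).antisymm (subset h.symm)

theorem Finset.inf_injective_of_not_inf_le {α ι : Type*} [SemilatticeInf α] [OrderTop α]
    {g : ι → α} (hg : ∀ i (I : Finset ι), i ∉ I → ¬ I.inf g ≤ g i) :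
    Function.Injective fun I : Finset ι ↦ I.inf g :=
  Finset.sup_injective_of_not_le_sup (α := αᵒᵈ) hg

theorem Fin.two_subset_singleton_rev {i : Fin 2} {I : Finset (Fin 2)} (hi : i ∉ I) :
    I ⊆ {i.rev} := fun j hj ↦ by
  have : j ≠ i := ne_of_mem_of_not_mem hj hi
  fin_cases i <;> fin_cases j <;> simp_all

section Embeddings

variable {G : Type} [Group G]

theorem isJoinEmbedding_finsetSup {n : ℕ} {g : Fin n → Subgroup G}
    (hg : ∀ i (I : Finset (Fin n)), i ∉ I → ¬ g i ≤ I.sup g) :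
    IsJoinEmbedding G n fun I ↦ I.sup g :=
  ⟨Finset.sup_injective_of_not_le_sup hg, Finset.sup_empty, fun _ _ ↦ Finset.sup_union⟩

theorem isMeetEmbedding_finsetInf {n : ℕ} {g : Fin n → Subgroup G}
    (hg : ∀ i (I : Finset (Fin n)), i ∉ I → ¬ I.inf g ≤ g i) :
    IsMeetEmbedding G n fun I ↦ I.inf g :=
  ⟨Finset.inf_injective_of_not_inf_le hg, Finset.inf_empty, fun _ _ ↦ Finset.inf_union⟩

variable {A B : Subgroup G}

theorem isJoinEmbedding_pair (hAB : ¬ A ≤ B) (hBA : ¬ B ≤ A) :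
    IsJoinEmbedding G 2 fun I ↦ I.sup ![A, B] := by
  refine isJoinEmbedding_finsetSup fun i I hi hle ↦ ?_
  have := hle.trans <| (Finset.sup_mono (Fin.two_subset_singleton_rev hi)).trans_eq
    (Finset.sup_singleton ..)
  fin_cases i <;> simp_all

theorem isMeetEmbedding_pair (hAB : ¬ A ≤ B) (hBA : ¬ B ≤ A) :
    IsMeetEmbedding G 2 fun I ↦ I.inf ![A, B] := by
  refine isMeetEmbedding_finsetInf fun i I hi hle ↦ ?_
  have := (Finset.inf_singleton ..).symm.trans_le <|
    (Finset.inf_mono (Fin.two_subset_singleton_rev hi)).trans hle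
  fin_cases i <;> simp_all

end Embeddings

namespace QuaternionGroup

open Subgroup

theorem a_one_notMem_zpowers_xa_zero : (a 1 : QuaternionGroup 2) ∉ zpowers (xa 0) := by
  rw [mem_zpowers_iff_mem_range_orderOf, orderOf_xa]; decide

theorem xa_zero_notMem_zpowers_a_one : (xa 0 : QuaternionGroup 2) ∉ zpowers (a 1) := by
  rw [mem_zpowers_iff_mem_range_orderOf, orderOf_a_one]; decide

-- `a 2` is `-1`, and every nontrivial element other than `-1` squares to it.
theorem a_two_mem_of_ne_bot {H : Subgroup (QuaternionGroup 2)} (hH : H ≠ ⊥) : a 2 ∈ H := by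
  obtain ⟨x, hxH, hx⟩ := H.bot_or_exists_ne_one.resolve_left hH
  have key : ∀ x : QuaternionGroup 2, x ≠ 1 → x = a 2 ∨ x ^ 2 = a 2 := by decide
  rcases key x hx with h | h
  · exact h ▸ hxH
  · exact h ▸ pow_mem hxH 2

theorem inf_ne_bot_of_ne_bot {A B : Subgroup (QuaternionGroup 2)} (hA : A ≠ ⊥) (hB : B ≠ ⊥) :
    A ⊓ B ≠ ⊥ := fun h ↦
  absurd ((h ▸ mem_inf.mpr ⟨a_two_mem_of_ne_bot hA, a_two_mem_of_ne_bot hB⟩ : a 2 ∈ ⊥))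
    (by rw [mem_bot]; decide)

end QuaternionGroup

open QuaternionGroup Subgroup in
/-- B(2) embeds in the subgroup lattice of Q_8 both as a meet-semilattice
and as a join-semilattice, but not as a lattice: there is no injective f with f(∅) = ⊥,
f({1,2}) = Q_8, f({1,2}) = ⟨f({1}), f({2})⟩ and f(∅) = f({1}) ∩ f({2}); equivalently there
are no nontrivial proper subgroups A, B with A ∩ B trivial and ⟨A, B⟩ = Q_8. -/
theorem quaternion_boolean_semilattices :
    (∃ f : Finset (Fin 2) → Subgroup (QuaternionGroup 2), IsMeetEmbedding (QuaternionGroup 2) 2 f) ∧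
    (∃ f : Finset (Fin 2) → Subgroup (QuaternionGroup 2), IsJoinEmbedding (QuaternionGroup 2) 2 f) ∧
    ¬ (∃ f : Finset (Fin 2) → Subgroup (QuaternionGroup 2), Function.Injective f ∧
        f ∅ = ⊥ ∧ f Finset.univ = ⊤ ∧ f Finset.univ = f {0} ⊔ f {1} ∧ f ∅ = f {0} ⊓ f {1}) ∧
    ¬ (∃ A B : Subgroup (QuaternionGroup 2), A ≠ ⊥ ∧ A ≠ ⊤ ∧ B ≠ ⊥ ∧ B ≠ ⊤ ∧
        A ⊓ B = ⊥ ∧ A ⊔ B = ⊤) := by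
  have hAB : ¬ zpowers (a 1) ≤ zpowers (xa 0) := zpowers_le.not.mpr a_one_notMem_zpowers_xa_zero
  have hBA : ¬ zpowers (xa 0) ≤ zpowers (a 1) := zpowers_le.not.mpr xa_zero_notMem_zpowers_a_one
  refine ⟨⟨_, isMeetEmbedding_pair hAB hBA⟩, ⟨_, isJoinEmbedding_pair hAB hBA⟩, ?_, ?_⟩
  · rintro ⟨f, hf, hbot, -, -, hmeet⟩
    have hne : ∀ I ≠ ∅, f I ≠ ⊥ := fun I hI h ↦ hI (hf (h.trans hbot.symm))
    exact inf_ne_bot_of_ne_bot (hne _ (by simp)) (hne _ (by simp)) (hmeet.symm.trans hbot)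
  · rintro ⟨A, B, hA, -, hB, -, hAB, -⟩
    exact inf_ne_bot_of_ne_bot hA hB hAB
end
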